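/- arXiv:2212.07250 — 12 statements merged into one kernel-verified Lean document; each statement's English description precedes it below -/
import Mathlib

section
/- Let m be a monad on Type (with lawful monad structure) that is commutative, i.e. for all a : m α and b : m β, do {x ← a; y ← b; pure (x, y)} = do {y ← b; x ← a; pure (x, y)}, and affine, i.e. for all a : m α, do {_ ← a; pure ()} = pure (). Suppose iid : m ℝ → m (Stream' ℝ) satisfies the recursive equation iid p = do {x ← p; xs ← iid p; pure (Stream'.cons x xs)} for every p : m ℝ. Then for every p : m ℝ and every list l : List ℕ of pairwise distinct indices (l.Nodup), one has do {xs ← iid p; pure (l.map (fun i => xs.get i))} = l.mapM (fun _ => p); that is, reading off any finite family of distinct coordinates of iid p is the same program as making that many independent draws from p. -/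
/-!
Unfolding the defining equation of `iid p` once, coordinate `0` of the stream is a fresh draw
`x ← p` and coordinate `i + 1` is coordinate `i` of an independent copy of `iid p`. If `0` is not
among the requested indices, the draw `x` is discarded, which is harmless in an affine monad.
Otherwise `x` lands at the position of `0` in the index list, and commutativity lets one
insert a draw at any position of a list of independent draws. Induction on a strict upper bound
of the indices concludes.
-/

def IsCommutativeMonad (m : Type → Type) [Monad m] : Prop :=
  ∀ {α β : Type} (a : m α) (b : m β),
    (do let x ← a; let y ← b; pure (x, y)) = (do let y ← b; let x ← a; pure (x, y))

def IsAffineMonad (m : Type → Type) [Monad m] : Prop :=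
  ∀ {α : Type} (a : m α), (do let _ ← a; pure ()) = (pure () : m Unit)

section CommutativeAffine

variable {m : Type → Type} [Monad m] [LawfulMonad m]

theorem IsCommutativeMonad.bind_bind_comm (hcomm : IsCommutativeMonad m)
    {α β γ : Type} (a : m α) (b : m β) (k : α → β → m γ) :
    (a >>= fun x => b >>= fun y => k x y) = (b >>= fun y => a >>= fun x => k x y) := by
  simpa using congrArg (· >>= fun z => k z.1 z.2) (hcomm a b)

theorem IsAffineMonad.bind_const (haff : IsAffineMonad m) {α β : Type} (a : m α) (b : m β) :
    (a >>= fun _ => b) = b := by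
  simpa using congrArg (· >>= fun _ => b) (haff a)

theorem IsCommutativeMonad.mapM_const_insertIdx (hcomm : IsCommutativeMonad m)
    {α β : Type} (p : m α) (b : β) :
    ∀ (l : List β) {k : ℕ}, k ≤ l.length →
      (l.insertIdx k b).mapM (fun _ => p) =
        p >>= fun x => l.mapM (fun _ => p) >>= fun xs => pure (xs.insertIdx k x)
  | l, 0, _ => by simp [List.mapM_cons]
  | a :: l, k + 1, hk => by
    rw [List.insertIdx_succ_cons, List.mapM_cons, List.mapM_cons,
      hcomm.mapM_const_insertIdx p b l (by simpa using hk)]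
    simp only [bind_assoc, pure_bind, List.insertIdx_succ_cons]
    exact hcomm.bind_bind_comm _ _ _

end CommutativeAffine

theorem List.append_cons_eq_insertIdx {α : Type*} (l₁ l₂ : List α) (a : α) :
    l₁ ++ a :: l₂ = (l₁ ++ l₂).insertIdx l₁.length a := by
  induction l₁ <;> simp_all

theorem List.Nodup.map_pred {l : List ℕ} (h0 : 0 ∉ l) (hl : l.Nodup) : (l.map (· - 1)).Nodup :=
  hl.map_on fun x hx y hy hxy => by
    have := ne_of_mem_of_not_mem hx h0
    have := ne_of_mem_of_not_mem hy h0
    omega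

theorem Stream'.map_get_cons_of_zero_notMem {α : Type*} {l : List ℕ} (hl : 0 ∉ l)
    (x : α) (xs : Stream' α) :
    l.map (Stream'.cons x xs).get = (l.map (· - 1)).map xs.get := by
  simp only [List.map_map]
  refine List.map_congr_left fun i hi => ?_
  obtain ⟨j, rfl⟩ : ∃ j, i = j + 1 := Nat.exists_eq_succ_of_ne_zero (ne_of_mem_of_not_mem hi hl)
  exact Stream'.get_succ_cons j xs x

theorem bind_pure_map_get_eq_mapM_const_of_forall_lt {m : Type → Type} [Monad m] [LawfulMonad m]
    (hcomm : IsCommutativeMonad m) (haff : IsAffineMonad m)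
    {α : Type} {p : m α} {s : m (Stream' α)}
    (hs : s = p >>= fun x => s >>= fun xs => pure (Stream'.cons x xs)) :
    ∀ (N : ℕ) (l : List ℕ), l.Nodup → (∀ i ∈ l, i < N) →
      (s >>= fun xs => pure (l.map xs.get)) = l.mapM (fun _ => p)
  | 0, l, _, hlt => by
    obtain rfl : l = [] := List.eq_nil_iff_forall_not_mem.mpr fun i hi => by simpa using hlt i hi
    simp only [List.map_nil, List.mapM_nil]
    exact haff.bind_const s _
  | N + 1, l, hl, hlt => by
    have unfold_once (f : Stream' α → List α) :
        (s >>= fun xs => pure (f xs)) = p >>= fun x => s >>= fun xs => pure (f (.cons x xs)) := by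
      conv_lhs => rw [hs]
      simp only [bind_assoc, pure_bind]
    have shift (l' : List ℕ) (hsub : l' ⊆ l) (h0 : 0 ∉ l') (hl' : l'.Nodup) :
        (s >>= fun xs => pure ((l'.map (· - 1)).map xs.get)) = l'.mapM (fun _ => p) := by
      rw [bind_pure_map_get_eq_mapM_const_of_forall_lt hcomm haff hs N _ (hl'.map_pred h0),
        List.mapM_map]
      · rfl
      · simp only [List.mem_map]
        rintro _ ⟨i, hi, rfl⟩
        have := hlt i (hsub hi)
        have := ne_of_mem_of_not_mem hi h0
        omega
    by_cases h0 : 0 ∈ l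
    · obtain ⟨l₁, l₂, rfl⟩ := List.append_of_mem h0
      obtain ⟨h0', hl'⟩ := List.nodup_cons.mp (List.nodup_middle.mp hl)
      have hsub : l₁ ++ l₂ ⊆ l₁ ++ 0 :: l₂ := fun i hi => by simp at hi ⊢; tauto
      rw [List.append_cons_eq_insertIdx, hcomm.mapM_const_insertIdx _ _ _ (by simp), unfold_once,
        ← shift _ hsub h0' hl']
      simp only [List.map_insertIdx, Stream'.get_zero_cons,
        Stream'.map_get_cons_of_zero_notMem h0', bind_assoc, pure_bind]
    · rw [unfold_once]
      simp only [Stream'.map_get_cons_of_zero_notMem h0]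
      rw [haff.bind_const, shift l (List.Subset.refl l) h0 hl]

/-- Theorem 2.1 of the paper: in a commutative affine monad, reading off any finite
family of distinct coordinates of an `iid` stream is the same program as making that
many independent draws. -/
theorem iid_distinct_coords_eq_indep_draws
    (m : Type → Type) [Monad m] [LawfulMonad m]
    (hcomm : ∀ {α β : Type} (a : m α) (b : m β),
      (do let x ← a; let y ← b; pure (x, y)) = (do let y ← b; let x ← a; pure (x, y)))
    (haff : ∀ {α : Type} (a : m α),
      (do let _ ← a; pure ()) = (pure () : m Unit))
    (iid : m ℝ → m (Stream' ℝ))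
    (hiid : ∀ p : m ℝ,
      iid p = do
        let x ← p
        let xs ← iid p
        pure (Stream'.cons x xs))
    (p : m ℝ) (l : List ℕ) (hl : l.Nodup) :
    (do let xs ← iid p; pure (l.map fun i => xs.get i)) = l.mapM (fun _ => p) :=
  bind_pure_map_get_eq_mapM_const_of_forall_lt hcomm haff (hiid p) (l.sum + 1) l hl
    fun _ hi => Nat.lt_succ_of_le (List.le_sum_of_mem hi)
end

section
/- Let C be a category with a terminal object ⊤ and let T be a monad on C. Then ⊤ is a terminal object of the Kleisli category of T if and only if T.obj ⊤ is isomorphic to ⊤ (i.e., the monad T is affine). -/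
open CategoryTheory CategoryTheory.Limits

/-! Kleisli morphisms `X ⟶ Y` are exactly the `C`-morphisms `X ⟶ T Y`, so `Y` is terminal in the
Kleisli category iff `T Y` is terminal in `C`; for `Y = ⊤` the latter says `T ⊤ ≅ ⊤`. -/

namespace CategoryTheory.Kleisli

variable {C : Type*} [Category C] (T : Monad C)

def isTerminalMkEquiv (Y : C) : IsTerminal (Kleisli.mk T Y) ≃ IsTerminal (T.obj Y) where
  toFun h := .ofUniqueHom (fun X => (h.from (Kleisli.mk T X)).of)
    fun _ m => congrArg Hom.of (h.hom_ext ⟨m⟩ _)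
  invFun h := .ofUniqueHom (fun X => ⟨h.from X.of⟩) fun _ _ => hom_ext (h.hom_ext _ _)
  left_inv _ := Subsingleton.elim _ _
  right_inv _ := Subsingleton.elim _ _

end CategoryTheory.Kleisli

theorem CategoryTheory.Limits.nonempty_isTerminal_iff_nonempty_iso_terminal {C : Type*}
    [Category C] [HasTerminal C] (X : C) : Nonempty (IsTerminal X) ↔ Nonempty (X ≅ ⊤_ C) :=
  ⟨fun ⟨h⟩ => ⟨h.uniqueUpToIso terminalIsTerminal⟩,
    fun ⟨e⟩ => ⟨terminalIsTerminal.ofIso e.symm⟩⟩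

/-- Part (3) of Lemma 5.1 of the paper: for a monad `T` on a category with a terminal
object, the terminal object is terminal in the Kleisli category of `T` if and only if
`T ⊤ ≅ ⊤`, i.e. the monad `T` is affine. -/
theorem kleisli_terminal_iff_affine
    {C : Type*} [Category C] [HasTerminal C] (T : Monad C) :
    Nonempty (IsTerminal (Kleisli.mk T (⊤_ C))) ↔ Nonempty (T.obj (⊤_ C) ≅ ⊤_ C) :=
  (Kleisli.isTerminalMkEquiv T (⊤_ C)).nonempty_congr.trans
    (nonempty_isTerminal_iff_nonempty_iso_terminal _)
end

section
/- Fix p : ℝ with 0 ≤ p ≤ 1. Let U = volume.restrict (Set.Icc (0:ℝ) 1) be the uniform probability measure on ℝ and let ν_p = ENNReal.ofReal p • (U.prod U) + ENNReal.ofReal (1 - p) • (Measure.map (fun x => (x, x)) U) be the probability measure on ℝ × ℝ (resample the coordinate with probability p, keep it with probability 1 − p). Let m be the measure on Ω × Ω, where Ω = List ℕ → ℝ with the product σ-algebra, obtained as the pushforward of the infinite product measure Measure.infinitePi (fun _ : List ℕ => ν_p) on List ℕ → ℝ × ℝ under the map g ↦ (fun l => (g l).1, fun l => (g l).2). Then m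 is invariant under the swap map: Measure.map Prod.swap m = m. -/
/-!
A single node of `mutateTree p` has joint law `resampleCoupling p U`: a mixture of the independent
coupling `U ⊗ U` and the diagonal coupling, both of which are symmetric. Swapping the two trees
acts node by node, so it preserves every finite-dimensional product of this coupling, and hence,
by uniqueness of projective limits of finite measures, the infinite product itself.
-/

open MeasureTheory

namespace MeasureTheory

noncomputable def resampleCoupling {α : Type*} [MeasurableSpace α] (p : ℝ) (U : Measure α) :
    Measure (α × α) :=
  ENNReal.ofReal p • U.prod U + ENNReal.ofReal (1 - p) • U.map fun x => (x, x)

section ResampleCoupling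

variable {α : Type*} [MeasurableSpace α] (p : ℝ) (U : Measure α)

instance [IsFiniteMeasure U] : IsFiniteMeasure (resampleCoupling p U) :=
  have := (U.prod U).smul_finite (ENNReal.ofReal_ne_top (r := p))
  have := (U.map fun x => (x, x)).smul_finite (ENNReal.ofReal_ne_top (r := 1 - p))
  isFiniteMeasureAdd

lemma Measure.map_swap_map_diag : (U.map fun x => (x, x)).map Prod.swap = U.map fun x => (x, x) :=
  Measure.map_map measurable_swap (measurable_id.prodMk measurable_id)

lemma measurePreserving_swap_resampleCoupling [SFinite U] :
    MeasurePreserving Prod.swap (resampleCoupling p U) (resampleCoupling p U) where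
  measurable := measurable_swap
  map_eq := by
    rw [resampleCoupling, Measure.map_add _ _ measurable_swap, Measure.map_smul, Measure.map_smul,
      Measure.prod_swap, Measure.map_swap_map_diag]

end ResampleCoupling

section ProductMeasures

variable {ι : Type*} {α β : ι → Type*} [∀ i, MeasurableSpace (α i)] [∀ i, MeasurableSpace (β i)]
  {μ : ∀ i, Measure (α i)} {μ' : ∀ i, Measure (β i)} {f : ∀ i, α i → β i}

lemma MeasurePreserving.pi [Fintype ι] [∀ i, SigmaFinite (μ' i)]
    (hf : ∀ i, MeasurePreserving (f i) (μ i) (μ' i)) :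
    MeasurePreserving (fun x i => f i (x i)) (Measure.pi μ) (Measure.pi μ') where
  measurable := measurable_pi_lambda _ fun i => (hf i).measurable.comp (measurable_pi_apply i)
  map_eq := by
    have (i : ι) : SigmaFinite ((μ i).map (f i)) := (hf i).map_eq ▸ inferInstance
    rw [Measure.pi_map_pi fun i => (hf i).measurable.aemeasurable]
    exact congrArg Measure.pi (funext fun i => (hf i).map_eq)

lemma IsProjectiveLimit.measurePreserving_pi {f : ∀ i, α i → α i} [∀ i, IsFiniteMeasure (μ i)]
    {π : Measure (∀ i, α i)}
    (hπ : IsProjectiveLimit π fun J : Finset ι => Measure.pi fun j : J => μ j)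
    (hf : ∀ i, MeasurePreserving (f i) (μ i) (μ i)) :
    MeasurePreserving (fun x i => f i (x i)) π π := by
  have hF : Measurable fun (x : ∀ i, α i) i => f i (x i) :=
    measurable_pi_lambda _ fun i => (hf i).measurable.comp (measurable_pi_apply i)
  refine ⟨hF, IsProjectiveLimit.unique (fun J => ?_) hπ⟩
  have hfJ := MeasurePreserving.pi fun j : J => hf j
  rw [Measure.map_map (Finset.measurable_restrict J) hF,
    show J.restrict ∘ (fun x i => f i (x i)) = (fun x (j : J) => f j (x j)) ∘ J.restrict from rfl,
    ← Measure.map_map hfJ.measurable (Finset.measurable_restrict J), hπ J, hfJ.map_eq]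

end ProductMeasures

end MeasureTheory

theorem mutateTree_joint_swap_invariant_general
    (p : ℝ)
    (U : Measure ℝ) (hU : U = volume.restrict (Set.Icc (0:ℝ) 1))
    (ν : Measure (ℝ × ℝ))
    (hν : ν = ENNReal.ofReal p • (U.prod U)
        + ENNReal.ofReal (1 - p) • (Measure.map (fun x => (x, x)) U))
    (π : Measure (List ℕ → ℝ × ℝ))
    (hπ : IsProjectiveLimit π (fun J : Finset (List ℕ) => Measure.pi fun _ : J => ν))
    (m : Measure ((List ℕ → ℝ) × (List ℕ → ℝ)))
    (hm : m = Measure.map (fun g => (fun l => (g l).1, fun l => (g l).2)) π) :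
    Measure.map Prod.swap m = m := by
  have : IsFiniteMeasure U := hU ▸ inferInstance
  have hν_swap : MeasurePreserving Prod.swap ν ν := hν ▸ measurePreserving_swap_resampleCoupling p U
  have : IsFiniteMeasure ν := hν ▸ inferInstanceAs (IsFiniteMeasure (resampleCoupling p U))
  have hπ_swap := hπ.measurePreserving_pi fun _ => hν_swap
  have hunzip : Measurable fun g : List ℕ → ℝ × ℝ => (fun l => (g l).1, fun l => (g l).2) :=
    (MeasurableEquiv.arrowProdEquivProdArrow ℝ ℝ (List ℕ)).measurable
  subst hm
  rw [Measure.map_map measurable_swap hunzip]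
  exact (Measure.map_map hunzip hπ_swap.measurable).symm.trans (congrArg _ hπ_swap.map_eq)

/-- Reversibility of the `mutateTree p` proposal kernel (Section 4.2 of the paper):
the joint law `m` of `(ω, ω')`, where `ω` is an infinite product of uniforms on the rose
tree `List ℕ → ℝ` and `ω'` independently resamples each node with probability `p`, is
invariant under swapping the two components. The infinite product measure is
characterized as the projective (Kolmogorov) limit of its finite-dimensional products. -/
theorem mutateTree_joint_swap_invariant
    (p : ℝ) (hp0 : 0 ≤ p) (hp1 : p ≤ 1)
    (U : Measure ℝ) (hU : U = volume.restrict (Set.Icc (0:ℝ) 1))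
    (ν : Measure (ℝ × ℝ))
    (hν : ν = ENNReal.ofReal p • (U.prod U)
        + ENNReal.ofReal (1 - p) • (Measure.map (fun x => (x, x)) U))
    (π : Measure (List ℕ → ℝ × ℝ)) [IsProbabilityMeasure π]
    (hπ : IsProjectiveLimit π (fun J : Finset (List ℕ) => Measure.pi fun _ : J => ν))
    (m : Measure ((List ℕ → ℝ) × (List ℕ → ℝ)))
    (hm : m = Measure.map (fun g => (fun l => (g l).1, fun l => (g l).2)) π) :
    Measure.map Prod.swap m = m :=
  mutateTree_joint_swap_invariant_general p U hU ν hν π hπ m hm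
end

section
/- Let Ω be a measurable space and let m be a measure on Ω × Ω that is invariant under the swap map: Measure.map Prod.swap m = m. Let ℓ : Ω → ℝ≥0∞ be measurable with ℓ ω ≠ 0 and ℓ ω ≠ ∞ for every ω. Then for every measurable f : Ω × Ω → ℝ≥0∞, ∫⁻ q, f q * (ℓ q.2 / ℓ q.1) * ℓ q.1 ∂m = ∫⁻ q, f q.swap * ℓ q.1 ∂m. In other words, a proposal kernel whose joint measure with the base probability measure is swap-invariant is Green with ratio r(ω₁, ω₂) = ℓ(ω₂) / ℓ(ω₁). -/
open MeasureTheory ENNReal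

theorem MeasureTheory.lintegral_comp_swap_of_map_swap_eq {α : Type*} [MeasurableSpace α]
    {m : Measure (α × α)} (hm : m.map Prod.swap = m) (g : α × α → ℝ≥0∞) :
    ∫⁻ q, g q.swap ∂m = ∫⁻ q, g q ∂m := by
  conv_rhs => rw [← hm]
  exact (lintegral_map_equiv g (MeasurableEquiv.prodComm (α := α) (β := α))).symm

theorem green_of_swap_invariant_general
    {Ω : Type*} [MeasurableSpace Ω]
    (m : Measure (Ω × Ω)) (hm : Measure.map Prod.swap m = m)
    (ℓ : Ω → ℝ≥0∞)
    (hℓ0 : ∀ ω, ℓ ω ≠ 0) (hℓtop : ∀ ω, ℓ ω ≠ ∞)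
    (f : Ω × Ω → ℝ≥0∞) :
    ∫⁻ q, f q * (ℓ q.2 / ℓ q.1) * ℓ q.1 ∂m = ∫⁻ q, f q.swap * ℓ q.1 ∂m := by
  have ratio_cancel (q : Ω × Ω) : f q * (ℓ q.2 / ℓ q.1) * ℓ q.1 = f q * ℓ q.2 := by
    rw [mul_assoc, ENNReal.div_mul_cancel (hℓ0 _) (hℓtop _)]
  simp only [ratio_cancel]
  exact (lintegral_comp_swap_of_map_swap_eq hm fun q ↦ f q * ℓ q.2).symm

/-- Theorem 4.1 of the paper: if the joint measure `m` of the base measure and a proposal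
kernel is swap-invariant (the kernel is reversible), then the kernel is Green with ratio
`r(ω₁, ω₂) = ℓ(ω₂) / ℓ(ω₁)`. -/
theorem green_of_swap_invariant
    {Ω : Type*} [MeasurableSpace Ω]
    (m : Measure (Ω × Ω)) (hm : Measure.map Prod.swap m = m)
    (ℓ : Ω → ℝ≥0∞) (hℓ : Measurable ℓ)
    (hℓ0 : ∀ ω, ℓ ω ≠ 0) (hℓtop : ∀ ω, ℓ ω ≠ ∞)
    (f : Ω × Ω → ℝ≥0∞) (hf : Measurable f) :
    ∫⁻ q, f q * (ℓ q.2 / ℓ q.1) * ℓ q.1 ∂m = ∫⁻ q, f q.swap * ℓ q.1 ∂m :=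
  green_of_swap_invariant_general m hm ℓ hℓ0 hℓtop f
end

section
/- Let Ω be a measurable space, μ a probability measure on Ω, ℓ : Ω → ℝ≥0∞ measurable with ∫⁻ ω, ℓ ω ∂μ < ∞, k a Markov kernel on Ω, and r : Ω × Ω → ℝ≥0∞ measurable, such that k is Green with respect to (μ, ℓ) with ratio r. Let B = (μ.withDensity ℓ) ⊗ₘ k be the joint measure on Ω × Ω of the unnormalized measure and the proposal kernel. Then for B-almost every pair q = (ω, ω'), one has r (ω, ω') * r (ω', ω) = 1. -/
/-!
Tested against indicators, the Green identity says that `r • B` is the image of `B` under the swap.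
Weighting once more by `r ∘ swap` and transporting through the swap again gives
`(r * r ∘ swap) • B = swap_* swap_* B = B`; since `B` is finite, a density that does not change
it is `1` almost everywhere.
-/

open MeasureTheory ProbabilityTheory ENNReal

namespace MeasureTheory.Measure

variable {α : Type*} [MeasurableSpace α] {ν : Measure α} {σ : α → α} {r : α → ℝ≥0∞}

theorem withDensity_map (hσ : Measurable σ) {g : α → ℝ≥0∞} (hg : Measurable g) :
    (ν.map σ).withDensity g = (ν.withDensity (g ∘ σ)).map σ := by
  ext s hs
  rw [withDensity_apply _ hs, map_apply hσ hs, withDensity_apply _ (hσ hs),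
    setLIntegral_map hs hg hσ, Function.comp_def]

theorem withDensity_eq_map_of_lintegral_mul_eq (hσ : Measurable σ)
    (h : ∀ f : α → ℝ≥0∞, Measurable f → ∫⁻ x, f x * r x ∂ν = ∫⁻ x, f (σ x) ∂ν) :
    ν.withDensity r = ν.map σ := by
  ext s hs
  have hind := h (s.indicator 1) (measurable_one.indicator hs)
  simp only [← Set.indicator_mul_left, Pi.one_apply, one_mul] at hind
  rw [withDensity_apply _ hs, map_apply hσ hs, ← lintegral_indicator hs, hind,
    ← lintegral_indicator_one (hσ hs)]
  rfl

theorem withDensity_mul_comp_eq_self (hσ : Measurable σ) (hσσ : Function.Involutive σ)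
    (hr : Measurable r) (h : ν.withDensity r = ν.map σ) :
    ν.withDensity (r * (r ∘ σ)) = ν := by
  rw [withDensity_mul _ hr (hr.comp hσ), h, withDensity_map hσ (hr.comp hσ),
    Function.comp_assoc, hσσ.comp_self, Function.comp_id, h, map_map hσ hσ, hσσ.comp_self,
    map_id]

theorem ae_mul_comp_eq_one_of_lintegral_mul_eq [SigmaFinite ν] (hσ : Measurable σ)
    (hσσ : Function.Involutive σ) (hr : Measurable r)
    (h : ∀ f : α → ℝ≥0∞, Measurable f → ∫⁻ x, f x * r x ∂ν = ∫⁻ x, f (σ x) ∂ν) :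
    ∀ᵐ x ∂ν, r x * r (σ x) = 1 := by
  have hone : ν.withDensity (r * (r ∘ σ)) = ν.withDensity 1 := by
    rw [withDensity_one]
    exact withDensity_mul_comp_eq_self hσ hσσ hr (withDensity_eq_map_of_lintegral_mul_eq hσ h)
  exact (withDensity_eq_iff_of_sigmaFinite (hr.mul (hr.comp hσ)).aemeasurable
    aemeasurable_const).mp hone

end MeasureTheory.Measure

theorem ProbabilityTheory.lintegral_withDensity_compProd {α β : Type*} [MeasurableSpace α]
    [MeasurableSpace β] {μ : Measure α} [SFinite μ] {ℓ : α → ℝ≥0∞} (hℓ : Measurable ℓ)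
    {κ : Kernel α β} [IsSFiniteKernel κ] {g : α × β → ℝ≥0∞} (hg : Measurable g) :
    ∫⁻ q, g q ∂((μ.withDensity ℓ) ⊗ₘ κ) = ∫⁻ a, (∫⁻ b, g (a, b) ∂κ a) * ℓ a ∂μ := by
  rw [Measure.lintegral_compProd hg,
    lintegral_withDensity_eq_lintegral_mul _ hℓ hg.lintegral_kernel_prod_right']
  simp only [Pi.mul_apply, mul_comm]

/-- The Green ratio is almost everywhere multiplicatively inverse to its swap (Section 5.3
of the paper): if `k` is Green with respect to `(μ, ℓ)` with ratio `r`, then for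
`(μ.withDensity ℓ) ⊗ₘ k`-almost every pair `(ω, ω')`, `r (ω, ω') * r (ω', ω) = 1`. -/
theorem green_ratio_mul_swap_ae_eq_one
    {Ω : Type*} [MeasurableSpace Ω]
    (μ : Measure Ω) [IsProbabilityMeasure μ]
    (ℓ : Ω → ℝ≥0∞) (hℓ : Measurable ℓ) (hℓint : ∫⁻ ω, ℓ ω ∂μ < ∞)
    (k : Kernel Ω Ω) [IsMarkovKernel k]
    (r : Ω × Ω → ℝ≥0∞) (hr : Measurable r)
    (hGreen : ∀ f : Ω × Ω → ℝ≥0∞, Measurable f →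
      ∫⁻ ω, (∫⁻ ω', f (ω, ω') * r (ω, ω') ∂(k ω)) * ℓ ω ∂μ
        = ∫⁻ ω, (∫⁻ ω', f (ω', ω) ∂(k ω)) * ℓ ω ∂μ) :
    ∀ᵐ q ∂((μ.withDensity ℓ) ⊗ₘ k), r (q.1, q.2) * r (q.2, q.1) = 1 := by
  have : IsFiniteMeasure (μ.withDensity ℓ) := isFiniteMeasure_withDensity hℓint.ne
  refine Measure.ae_mul_comp_eq_one_of_lintegral_mul_eq measurable_swap Prod.swap_swap hr
    fun f hf ↦ ?_
  calc ∫⁻ q, f q * r q ∂((μ.withDensity ℓ) ⊗ₘ k)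
      = ∫⁻ ω, (∫⁻ ω', f (ω, ω') * r (ω, ω') ∂(k ω)) * ℓ ω ∂μ :=
        lintegral_withDensity_compProd hℓ (hf.mul hr)
    _ = ∫⁻ ω, (∫⁻ ω', f (ω', ω) ∂(k ω)) * ℓ ω ∂μ := hGreen f hf
    _ = ∫⁻ q, f q.swap ∂((μ.withDensity ℓ) ⊗ₘ k) :=
        (lintegral_withDensity_compProd hℓ (hf.comp measurable_swap)).symm
end

section
/- Let Ω be a measurable space, μ a probability measure on Ω, ℓ : Ω → ℝ≥0∞ measurable with ∫⁻ ω, ℓ ω ∂μ < ∞, k a Markov kernel on Ω, and r : Ω × Ω → ℝ≥0∞ measurable, such that k is Green with respect to (μ, ℓ) with ratio r. Then the accepted-move part of the Metropolis–Hastings–Green dynamics is in detailed balance: for every measurable f : Ω × Ω → ℝ≥0∞, ∫⁻ ω, (∫⁻ ω', f (ω, ω') * min 1 (r (ω, ω')) ∂(k ω)) * ℓ ω ∂μ = ∫⁻ ω, (∫⁻ ω', f (ω', ω) * min 1 (r (ω, ω')) ∂(k ω)) * ℓ ω ∂μ. -/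
open MeasureTheory ProbabilityTheory ENNReal

/-!
If `r · η = swap_* η` for `η = (ℓ μ) ⊗ k`, applying this identity twice gives
`r(ω, ω') r(ω', ω) · η = η`, so, `η` being finite, `r(ω, ω') r(ω', ω) = 1` for `η`-a.e.
`(ω, ω')`. Hence `min 1 r = r · min 1 (r ∘ swap)` a.e., and one more application of the
Green identity to `f · min 1 (r ∘ swap)` exchanges the two sides.
-/

lemma mul_min_one_of_mul_eq_one {M : Type*} [MulOneClass M] [LinearOrder M] [MulLeftMono M]
    {a b : M} (h : a * b = 1) :
    a * min 1 b = min 1 a := by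
  rw [mul_min, mul_one, h, min_comm]

def IsGreenRatio {α : Type*} [MeasurableSpace α] (η : Measure (α × α)) (r : α × α → ℝ≥0∞) :
    Prop :=
  ∀ g : α × α → ℝ≥0∞, Measurable g → ∫⁻ p, g p * r p ∂η = ∫⁻ p, g p.swap ∂η

section Reversibility

variable {α : Type*} [MeasurableSpace α] {η : Measure (α × α)} {r : α × α → ℝ≥0∞}

lemma lintegral_mul_mul_swap_eq_of_green (hr : Measurable r)
    (hG : IsGreenRatio η r)
    {g : α × α → ℝ≥0∞} (hg : Measurable g) :
    ∫⁻ p, g p * (r p * r p.swap) ∂η = ∫⁻ p, g p ∂η :=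
  calc ∫⁻ p, g p * (r p * r p.swap) ∂η
      = ∫⁻ p, (g p * r p.swap) * r p ∂η := lintegral_congr fun p => by ring
    _ = ∫⁻ p, g p.swap * r p ∂η := hG _ (hg.mul (hr.comp measurable_swap))
    _ = ∫⁻ p, g p ∂η := hG _ (hg.comp measurable_swap)

lemma ae_mul_swap_eq_one_of_green [SigmaFinite η] (hr : Measurable r)
    (hG : IsGreenRatio η r) :
    ∀ᵐ p ∂η, r p * r p.swap = 1 := by
  have hc : Measurable fun p => r p * r p.swap := hr.mul (hr.comp measurable_swap)
  have h : η.withDensity (fun p => r p * r p.swap) = η.withDensity 1 := by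
    rw [withDensity_one]
    refine Measure.ext_of_lintegral _ fun g hg => ?_
    rw [lintegral_withDensity_eq_lintegral_mul _ hc hg,
      ← lintegral_mul_mul_swap_eq_of_green hr hG hg]
    simp only [Pi.mul_apply, mul_comm]
  exact (withDensity_eq_iff_of_sigmaFinite hc.aemeasurable aemeasurable_const).mp h

theorem lintegral_mul_min_one_swap_of_green [SigmaFinite η] (hr : Measurable r)
    (hG : IsGreenRatio η r)
    {f : α × α → ℝ≥0∞} (hf : Measurable f) :
    ∫⁻ p, f p * min 1 (r p) ∂η = ∫⁻ p, f p.swap * min 1 (r p) ∂η :=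
  calc ∫⁻ p, f p * min 1 (r p) ∂η
      = ∫⁻ p, f p * min 1 (r p.swap) * r p ∂η := by
        refine lintegral_congr_ae ?_
        filter_upwards [ae_mul_swap_eq_one_of_green hr hG] with p hp
        rw [mul_assoc, mul_comm _ (r p), mul_min_one_of_mul_eq_one hp]
    _ = ∫⁻ p, f p.swap * min 1 (r p) ∂η :=
        hG _ (hf.mul (measurable_const.min (hr.comp measurable_swap)))

end Reversibility

theorem mhg_accepted_moves_detailed_balance_general
    {Ω : Type*} [MeasurableSpace Ω]
    (μ : Measure Ω)
    (ℓ : Ω → ℝ≥0∞) (hℓ : Measurable ℓ) (hℓint : ∫⁻ ω, ℓ ω ∂μ < ∞)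
    (k : Kernel Ω Ω) [IsMarkovKernel k]
    (r : Ω × Ω → ℝ≥0∞) (hr : Measurable r)
    (hGreen : ∀ f : Ω × Ω → ℝ≥0∞, Measurable f →
      ∫⁻ ω, (∫⁻ ω', f (ω, ω') * r (ω, ω') ∂(k ω)) * ℓ ω ∂μ
        = ∫⁻ ω, (∫⁻ ω', f (ω', ω) ∂(k ω)) * ℓ ω ∂μ)
    (f : Ω × Ω → ℝ≥0∞) (hf : Measurable f) :
    ∫⁻ ω, (∫⁻ ω', f (ω, ω') * min 1 (r (ω, ω')) ∂(k ω)) * ℓ ω ∂μ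
      = ∫⁻ ω, (∫⁻ ω', f (ω', ω) * min 1 (r (ω, ω')) ∂(k ω)) * ℓ ω ∂μ := by
  have : IsFiniteMeasure (μ.withDensity ℓ) := isFiniteMeasure_withDensity hℓint.ne
  set η := (μ.withDensity ℓ) ⊗ₘ k
  have hη : ∀ g : Ω × Ω → ℝ≥0∞, Measurable g →
      ∫⁻ p, g p ∂η = ∫⁻ ω, (∫⁻ ω', g (ω, ω') ∂(k ω)) * ℓ ω ∂μ := fun g hg => by
    rw [Measure.lintegral_compProd hg,
      lintegral_withDensity_eq_lintegral_mul _ hℓ (hg.lintegral_kernel_prod_right' (κ := k))]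
    simp only [Pi.mul_apply, mul_comm]
  have hG : IsGreenRatio η r := fun g hg => by
    rw [hη (fun p => g p * r p) (hg.mul hr), hη (fun p => g p.swap) (hg.comp measurable_swap)]
    exact hGreen g hg
  have hmin : Measurable fun p => min 1 (r p) := measurable_const.min hr
  calc _ = ∫⁻ p, f p * min 1 (r p) ∂η := (hη _ (hf.mul hmin)).symm
    _ = ∫⁻ p, f p.swap * min 1 (r p) ∂η := lintegral_mul_min_one_swap_of_green hr hG hf
    _ = _ := hη (fun p => f p.swap * min 1 (r p)) ((hf.comp measurable_swap).mul hmin)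

/-- Detailed balance for the accepted moves of the Metropolis–Hastings–Green dynamics
(underlying Theorem 5.2 of the paper): if `k` is Green with respect to `(μ, ℓ)` with
ratio `r`, then weighting proposals by the acceptance probability `min 1 (r (ω, ω'))`
yields a reversible (detailed-balance) joint measure. -/
theorem mhg_accepted_moves_detailed_balance
    {Ω : Type*} [MeasurableSpace Ω]
    (μ : Measure Ω) [IsProbabilityMeasure μ]
    (ℓ : Ω → ℝ≥0∞) (hℓ : Measurable ℓ) (hℓint : ∫⁻ ω, ℓ ω ∂μ < ∞)
    (k : Kernel Ω Ω) [IsMarkovKernel k]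
    (r : Ω × Ω → ℝ≥0∞) (hr : Measurable r)
    (hGreen : ∀ f : Ω × Ω → ℝ≥0∞, Measurable f →
      ∫⁻ ω, (∫⁻ ω', f (ω, ω') * r (ω, ω') ∂(k ω)) * ℓ ω ∂μ
        = ∫⁻ ω, (∫⁻ ω', f (ω', ω) ∂(k ω)) * ℓ ω ∂μ)
    (f : Ω × Ω → ℝ≥0∞) (hf : Measurable f) :
    ∫⁻ ω, (∫⁻ ω', f (ω, ω') * min 1 (r (ω, ω')) ∂(k ω)) * ℓ ω ∂μ
      = ∫⁻ ω, (∫⁻ ω', f (ω', ω) * min 1 (r (ω, ω')) ∂(k ω)) * ℓ ω ∂μ :=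
  mhg_accepted_moves_detailed_balance_general μ ℓ hℓ hℓint k r hr hGreen f hf
end

section
/- Let Ω be a measurable space, μ a probability measure on Ω, ℓ : Ω → ℝ≥0∞ measurable with ∫⁻ ω, ℓ ω ∂μ < ∞, k a Markov kernel on Ω, and r : Ω × Ω → ℝ≥0∞ measurable, such that k is Green with respect to (μ, ℓ) with ratio r. Define the Metropolis–Hastings–Green kernel κMHG : Ω → Measure Ω by κMHG ω = (k ω).withDensity (fun ω' => min 1 (r (ω, ω'))) + (1 - ∫⁻ ω', min 1 (r (ω, ω')) ∂(k ω)) • Measure.dirac ω. Then the unnormalized measure μ.withDensity ℓ is stationary for κMHG: for every measurable set U, ∫⁻ ω, (κMHG ω) U ∂(μ.withDensity ℓ) = (μ.withDensity ℓ) U. -/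
/-!
Write `ν = π ⊗ₘ k` for `π = μ.withDensity ℓ`. The Green condition says exactly that
`ν.withDensity r = ν.map Prod.swap`; applying this twice gives `ν.withDensity (r * r ∘ swap) = ν`,
so `r (x, y) * r (y, x) = 1` for `ν`-a.e. `(x, y)`. Hence
`r (x, y) * min 1 (r (y, x)) = min 1 (r (x, y))` a.e., which is detailed balance: the flow
`ν.withDensity (min 1 ∘ r)` of accepted moves is invariant under `Prod.swap`. The mass flowing
into `U` by accepted moves therefore equals the mass accepted out of `U`, and the rejected mass
stays put, so `π U` is preserved.
-/

open MeasureTheory ProbabilityTheory ENNReal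

section Swap

variable {α β : Type*} [MeasurableSpace α] [MeasurableSpace β]

lemma map_swap_withDensity (ν : Measure (α × β)) (f : α × β → ℝ≥0∞) :
    (ν.withDensity f).map Prod.swap = (ν.map Prod.swap).withDensity (f ∘ Prod.swap) := by
  ext s hs
  have hswap : MeasurableEmbedding (Prod.swap : α × β → β × α) :=
    MeasurableEquiv.prodComm.measurableEmbedding
  rw [Measure.map_apply measurable_swap hs, withDensity_apply _ (measurable_swap hs),
    withDensity_apply _ hs, hswap.restrict_map, hswap.lintegral_map]
  simp

end Swap

section SwapDensity

variable {α : Type*} [MeasurableSpace α] {ν : Measure (α × α)} {r : α × α → ℝ≥0∞}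

lemma ae_mul_swap_eq_one_of_withDensity_eq_map_swap [SigmaFinite ν] (hr : Measurable r)
    (h : ν.withDensity r = ν.map Prod.swap) : ∀ᵐ p ∂ν, r p * r p.swap = 1 := by
  have hrs : Measurable (r ∘ Prod.swap) := hr.comp measurable_swap
  have : ν.withDensity (r * (r ∘ Prod.swap)) = ν.withDensity 1 := by
    rw [withDensity_mul _ hr hrs, h, ← map_swap_withDensity, h,
      Measure.map_map measurable_swap measurable_swap, Prod.swap_swap_eq, Measure.map_id,
      withDensity_one]
  exact (withDensity_eq_iff_of_sigmaFinite (hr.mul hrs).aemeasurable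
    aemeasurable_const).1 this

lemma map_swap_withDensity_min_one [SigmaFinite ν] (hr : Measurable r)
    (h : ν.withDensity r = ν.map Prod.swap) :
    (ν.withDensity fun p => min 1 (r p)).map Prod.swap = ν.withDensity fun p => min 1 (r p) := by
  rw [map_swap_withDensity, ← h, ← withDensity_mul _ hr
    ((measurable_const.min hr).comp measurable_swap)]
  refine withDensity_congr_ae ?_
  filter_upwards [ae_mul_swap_eq_one_of_withDensity_eq_map_swap hr h] with p hp
  simp [mul_min, hp, min_comm]

end SwapDensity

section AcceptReject

variable {Ω : Type*} [MeasurableSpace Ω]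

noncomputable def acceptReject (k : Kernel Ω Ω) (a : Ω × Ω → ℝ≥0∞) (ω : Ω) : Measure Ω :=
  (k ω).withDensity (fun ω' => a (ω, ω')) + (1 - ∫⁻ ω', a (ω, ω') ∂(k ω)) • Measure.dirac ω

lemma acceptReject_apply (k : Kernel Ω Ω) (a : Ω × Ω → ℝ≥0∞) (ω : Ω) {U : Set Ω}
    (hU : MeasurableSet U) :
    acceptReject k a ω U
      = ∫⁻ ω' in U, a (ω, ω') ∂(k ω) + U.indicator (fun ω => 1 - ∫⁻ ω', a (ω, ω') ∂(k ω)) ω := by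
  by_cases hω : ω ∈ U <;> simp [acceptReject, withDensity_apply _ hU, hU, hω]

lemma lintegral_acceptReject_apply (π : Measure Ω) [SFinite π] (k : Kernel Ω Ω)
    [IsMarkovKernel k] {a : Ω × Ω → ℝ≥0∞} (ha : Measurable a) (ha_le : ∀ p, a p ≤ 1)
    (hsymm : ((π ⊗ₘ k).withDensity a).map Prod.swap = (π ⊗ₘ k).withDensity a)
    {U : Set Ω} (hU : MeasurableSet U) :
    ∫⁻ ω, acceptReject k a ω U ∂π = π U := by
  set t : Ω → ℝ≥0∞ := fun ω => ∫⁻ ω', a (ω, ω') ∂(k ω)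
  have ht : Measurable t := ha.lintegral_kernel_prod_right'
  have ht_le (ω : Ω) : t ω ≤ 1 := by
    calc t ω ≤ ∫⁻ _, 1 ∂(k ω) := lintegral_mono fun ω' => ha_le (ω, ω')
      _ = 1 := by simp
  have hflow : ∫⁻ ω, ∫⁻ ω' in U, a (ω, ω') ∂(k ω) ∂π = ∫⁻ ω in U, t ω ∂π := by
    calc ∫⁻ ω, ∫⁻ ω' in U, a (ω, ω') ∂(k ω) ∂π
        = (π ⊗ₘ k).withDensity a (Set.univ ×ˢ U) := by
          rw [withDensity_apply _ (MeasurableSet.univ.prod hU),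
            Measure.setLIntegral_compProd ha MeasurableSet.univ hU, Measure.restrict_univ]
      _ = (π ⊗ₘ k).withDensity a (U ×ˢ Set.univ) := by
          conv_lhs => rw [← hsymm]
          rw [Measure.map_apply measurable_swap (MeasurableSet.univ.prod hU),
            Set.preimage_swap_prod]
      _ = ∫⁻ ω in U, t ω ∂π := by
          rw [withDensity_apply _ (hU.prod MeasurableSet.univ),
            Measure.setLIntegral_compProd ha hU MeasurableSet.univ]
          simp_rw [Measure.restrict_univ]
          rfl
  calc ∫⁻ ω, acceptReject k a ω U ∂π
      = ∫⁻ ω, ∫⁻ ω' in U, a (ω, ω') ∂(k ω) ∂π + ∫⁻ ω in U, 1 - t ω ∂π := by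
        simp_rw [acceptReject_apply k a _ hU]
        rw [lintegral_add_right _
            ((show Measurable fun ω => 1 - t ω from measurable_const.sub ht).indicator hU),
          lintegral_indicator hU]
    _ = ∫⁻ ω in U, (t ω + (1 - t ω)) ∂π := by
        rw [hflow, lintegral_add_left ht]
    _ = π U := by
        simp_rw [add_tsub_cancel_of_le (ht_le _)]
        simp

end AcceptReject

section Green

variable {Ω : Type*} [MeasurableSpace Ω]

def IsGreen (μ : Measure Ω) (ℓ : Ω → ℝ≥0∞) (k : Kernel Ω Ω) (r : Ω × Ω → ℝ≥0∞) : Prop :=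
  ∀ f : Ω × Ω → ℝ≥0∞, Measurable f →
    ∫⁻ ω, (∫⁻ ω', f (ω, ω') * r (ω, ω') ∂(k ω)) * ℓ ω ∂μ
      = ∫⁻ ω, (∫⁻ ω', f (ω', ω) ∂(k ω)) * ℓ ω ∂μ

variable {μ : Measure Ω} {ℓ : Ω → ℝ≥0∞} {k : Kernel Ω Ω} [SFinite (μ.withDensity ℓ)]
  [IsSFiniteKernel k]

lemma lintegral_withDensity_compProd (hℓ : Measurable ℓ) {f : Ω × Ω → ℝ≥0∞}
    (hf : Measurable f) :
    ∫⁻ p, f p ∂(μ.withDensity ℓ ⊗ₘ k) = ∫⁻ ω, (∫⁻ ω', f (ω, ω') ∂(k ω)) * ℓ ω ∂μ := by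
  rw [Measure.lintegral_compProd hf,
    lintegral_withDensity_eq_lintegral_mul _ hℓ hf.lintegral_kernel_prod_right']
  simp_rw [Pi.mul_apply, mul_comm (ℓ _)]

lemma IsGreen.withDensity_compProd_eq_map_swap {r : Ω × Ω → ℝ≥0∞} (hGreen : IsGreen μ ℓ k r)
    (hℓ : Measurable ℓ) (hr : Measurable r) :
    (μ.withDensity ℓ ⊗ₘ k).withDensity r = (μ.withDensity ℓ ⊗ₘ k).map Prod.swap := by
  ext s hs
  have hind : Measurable (s.indicator 1 : Ω × Ω → ℝ≥0∞) := measurable_one.indicator hs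
  calc (μ.withDensity ℓ ⊗ₘ k).withDensity r s
      = ∫⁻ p, s.indicator 1 p * r p ∂(μ.withDensity ℓ ⊗ₘ k) := by
        rw [withDensity_apply _ hs, ← lintegral_indicator hs]
        congr 1 with p
        by_cases hp : p ∈ s <;> simp [hp]
    _ = ∫⁻ p, s.indicator 1 p.swap ∂(μ.withDensity ℓ ⊗ₘ k) := by
        rw [lintegral_withDensity_compProd (f := fun p => s.indicator 1 p * r p) hℓ (hind.mul hr),
          lintegral_withDensity_compProd (f := fun p => s.indicator 1 p.swap) hℓ
            (hind.comp measurable_swap)]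
        exact hGreen _ hind
    _ = (μ.withDensity ℓ ⊗ₘ k).map Prod.swap s := by
        rw [Measure.map_apply measurable_swap hs, ← lintegral_indicator_one (measurable_swap hs)]
        rfl

end Green

theorem mhg_stationary_general
    {Ω : Type*} [MeasurableSpace Ω]
    (μ : Measure Ω)
    (ℓ : Ω → ℝ≥0∞) (hℓ : Measurable ℓ) (hℓint : ∫⁻ ω, ℓ ω ∂μ < ∞)
    (k : Kernel Ω Ω) [IsMarkovKernel k]
    (r : Ω × Ω → ℝ≥0∞) (hr : Measurable r)
    (hGreen : ∀ f : Ω × Ω → ℝ≥0∞, Measurable f →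
      ∫⁻ ω, (∫⁻ ω', f (ω, ω') * r (ω, ω') ∂(k ω)) * ℓ ω ∂μ
        = ∫⁻ ω, (∫⁻ ω', f (ω', ω) ∂(k ω)) * ℓ ω ∂μ)
    (κMHG : Ω → Measure Ω)
    (hκ : κMHG = fun ω =>
      (k ω).withDensity (fun ω' => min 1 (r (ω, ω')))
        + (1 - ∫⁻ ω', min 1 (r (ω, ω')) ∂(k ω)) • Measure.dirac ω) :
    ∀ U : Set Ω, MeasurableSet U →
      ∫⁻ ω, (κMHG ω) U ∂(μ.withDensity ℓ) = (μ.withDensity ℓ) U := by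
  intro U hU
  have : IsFiniteMeasure (μ.withDensity ℓ) := isFiniteMeasure_withDensity hℓint.ne
  have hswap : (μ.withDensity ℓ ⊗ₘ k).withDensity r = (μ.withDensity ℓ ⊗ₘ k).map Prod.swap :=
    IsGreen.withDensity_compProd_eq_map_swap hGreen hℓ hr
  subst hκ
  exact lintegral_acceptReject_apply _ k (measurable_const.min hr) (fun _ => min_le_left _ _)
    (map_swap_withDensity_min_one hr hswap) hU

/-- First assertion of Theorem 5.2 of the paper (Metropolis–Hastings–Green): if `k` is
Green with respect to `(μ, ℓ)` with ratio `r`, then the unnormalized measure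
`μ.withDensity ℓ` is stationary for the Metropolis–Hastings–Green kernel, which proposes
`ω' ∼ k(ω, ·)` and accepts with probability `min 1 (r (ω, ω'))`, otherwise staying at `ω`. -/
theorem mhg_stationary
    {Ω : Type*} [MeasurableSpace Ω]
    (μ : Measure Ω) [IsProbabilityMeasure μ]
    (ℓ : Ω → ℝ≥0∞) (hℓ : Measurable ℓ) (hℓint : ∫⁻ ω, ℓ ω ∂μ < ∞)
    (k : Kernel Ω Ω) [IsMarkovKernel k]
    (r : Ω × Ω → ℝ≥0∞) (hr : Measurable r)
    (hGreen : ∀ f : Ω × Ω → ℝ≥0∞, Measurable f →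
      ∫⁻ ω, (∫⁻ ω', f (ω, ω') * r (ω, ω') ∂(k ω)) * ℓ ω ∂μ
        = ∫⁻ ω, (∫⁻ ω', f (ω', ω) ∂(k ω)) * ℓ ω ∂μ)
    (κMHG : Ω → Measure Ω)
    (hκ : κMHG = fun ω =>
      (k ω).withDensity (fun ω' => min 1 (r (ω, ω')))
        + (1 - ∫⁻ ω', min 1 (r (ω, ω')) ∂(k ω)) • Measure.dirac ω) :
    ∀ U : Set Ω, MeasurableSet U →
      ∫⁻ ω, (κMHG ω) U ∂(μ.withDensity ℓ) = (μ.withDensity ℓ) U :=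
  mhg_stationary_general μ ℓ hℓ hℓint k r hr hGreen κMHG hκ
end

section
/- Let Ω be a measurable space which is standard Borel, let κ be a Markov kernel on Ω, and let ν be a probability measure on Ω that is stationary for κ, i.e. ν.bind κ = ν. Suppose κ is irreducible with respect to ν: for every ω ∈ Ω and every measurable set U with ν U > 0 there exists n ≥ 1 with ((fun m => m.bind κ)^[n] (Measure.dirac ω)) U > 0. Then ν is the unique stationary probability measure of κ: every probability measure ν' on Ω with ν'.bind κ = ν' satisfies ν' = ν. -/
/-!
Irreducibility forces every nonzero invariant measure to charge each `ν`-positive set: if an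
invariant `μ` vanished on such a set `U`, then `μ`-almost every starting point would never reach
`U`. Given two invariant probability measures `ν'` and `ν`, their infimum `ν' ⊓ ν` is invariant,
since its image under `κ` lies below both and has the same mass. Hence so are the remainders
`ν' - ν' ⊓ ν` and `ν - ν' ⊓ ν`, which are mutually singular; one of them lives on a `ν`-null set
and therefore misses a `ν`-positive set, so it vanishes, and then `ν' ≤ ν` or `ν ≤ ν'`.
-/

open MeasureTheory ProbabilityTheory

section

variable {α β : Type*} [MeasurableSpace α] [MeasurableSpace β]

namespace MeasureTheory.Measure

lemma bind_mono_left (κ : Kernel α β) {μ ν : Measure α} (h : μ ≤ ν) :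
    μ.bind κ ≤ ν.bind κ :=
  le_iff.2 fun s hs => by
    simp only [bind_apply hs κ.aemeasurable]
    exact lintegral_mono' h le_rfl

lemma iterate_bind_eq_bind_pow (κ : Kernel α α) (n : ℕ) (μ : Measure α) :
    (fun m : Measure α => m.bind κ)^[n] μ = μ.bind ⇑(κ ^ n) := by
  induction n with
  | zero => exact Measure.id_comp.symm
  | succ n ih => rw [Function.iterate_succ_apply', ih, Measure.comp_assoc, pow_succ']; rfl

instance isFiniteMeasure_inf (μ ν : Measure α) [IsFiniteMeasure μ] : IsFiniteMeasure (μ ⊓ ν) :=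
  isFiniteMeasure_of_le μ inf_le_left

lemma disjoint_sub_inf_sub_inf (μ ν : Measure α) [IsFiniteMeasure μ] :
    Disjoint (μ - μ ⊓ ν) (ν - μ ⊓ ν) := by
  intro ξ hξμ hξν
  have hle : ξ + μ ⊓ ν ≤ μ ⊓ ν :=
    le_inf ((add_le_add_left hξμ _).trans_eq (sub_add_cancel_of_le inf_le_left))
      ((add_le_add_left hξν _).trans_eq (sub_add_cancel_of_le inf_le_right))
  exact le_of_add_le_add_left (μ := μ ⊓ ν) (by change _ ≤ _ + 0; rwa [add_zero, add_comm])

lemma le_of_sub_inf_eq_zero {μ ν : Measure α} [IsFiniteMeasure μ] (h : μ - μ ⊓ ν = 0) : μ ≤ ν := by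
  have hinf := sub_add_cancel_of_le (inf_le_left : μ ⊓ ν ≤ μ)
  rw [h, zero_add] at hinf
  exact inf_eq_left.1 hinf

end MeasureTheory.Measure

namespace ProbabilityTheory.Kernel

variable {κ : Kernel α α} {μ ν : Measure α}

lemma Invariant.inf [IsMarkovKernel κ] [IsFiniteMeasure μ] (hμ : κ.Invariant μ)
    (hν : κ.Invariant ν) : κ.Invariant (μ ⊓ ν) := by
  refine Measure.eq_of_le_of_measure_univ_eq ?_ Measure.comp_apply_univ
  exact le_inf ((Measure.bind_mono_left κ inf_le_left).trans_eq hμ)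
    ((Measure.bind_mono_left κ inf_le_right).trans_eq hν)

lemma Invariant.sub [IsFiniteMeasure ν] (hμ : κ.Invariant μ) (hν : κ.Invariant ν) (hνμ : ν ≤ μ) :
    κ.Invariant (μ - ν) := by
  refine Measure.ext fun s hs => ?_
  have h := congrArg (· s) (show (μ - ν + ν).bind κ = μ - ν + ν by
    rw [Measure.sub_add_cancel_of_le hνμ, hμ.def])
  rw [Measure.comp_add, hν.def, Measure.add_apply, Measure.add_apply] at h
  exact (ENNReal.add_left_inj (measure_ne_top ν s)).1 h

lemma Invariant.eq_zero_of_measure_eq_zero (hμ : κ.Invariant μ) {U : Set α} (hU : MeasurableSet U)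
    (hreach : ∀ a, ∃ n, 0 < ((fun m : Measure α => m.bind κ)^[n] (Measure.dirac a)) U)
    (hμU : μ U = 0) : μ = 0 := by
  have hnull : ∀ᵐ a ∂μ, ∀ n, (κ ^ n) a U = 0 := by
    refine ae_all_iff.2 fun n => (lintegral_eq_zero_iff (Kernel.measurable_coe _ hU)).1 ?_
    rw [← Measure.bind_apply hU (κ ^ n).aemeasurable, ← Measure.iterate_bind_eq_bind_pow,
      Function.iterate_fixed (f := fun m : Measure α => m.bind κ) hμ n, hμU]
  by_contra hμ0
  have : (ae μ).NeBot := ae_neBot.2 hμ0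
  obtain ⟨a, ha⟩ := hnull.exists
  obtain ⟨n, hn⟩ := hreach a
  rw [Measure.iterate_bind_eq_bind_pow, Measure.dirac_bind (κ ^ n).measurable] at hn
  exact hn.ne' (ha n)

end ProbabilityTheory.Kernel

end

theorem stationary_unique_of_irreducible_general
    {Ω : Type*} [MeasurableSpace Ω]
    (κ : Kernel Ω Ω) [IsMarkovKernel κ]
    (ν : Measure Ω) [IsProbabilityMeasure ν]
    (hstat : ν.bind (fun ω => κ ω) = ν)
    (hirr : ∀ ω : Ω, ∀ U : Set Ω, MeasurableSet U → ν U > 0 →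
      ∃ n ≥ 1, ((fun m : Measure Ω => m.bind (fun ω' => κ ω'))^[n] (Measure.dirac ω)) U > 0)
    (ν' : Measure Ω) [IsProbabilityMeasure ν']
    (hstat' : ν'.bind (fun ω => κ ω) = ν') :
    ν' = ν := by
  have hinf : κ.Invariant (ν' ⊓ ν) := Kernel.Invariant.inf hstat' hstat
  have hsing := Measure.mutuallySingular_of_disjoint (Measure.disjoint_sub_inf_sub_inf ν' ν)
  set S := hsing.nullSet
  have hS := hsing.measurableSet_nullSet
  have eq_zero_of_null {μ : Measure Ω} {U : Set Ω} (hμ : κ.Invariant μ) (hU : MeasurableSet U)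
      (hνU : ν U ≠ 0) (hμU : μ U = 0) : μ = 0 :=
    hμ.eq_zero_of_measure_eq_zero hU
      (fun ω => (hirr ω U hU (pos_iff_ne_zero.2 hνU)).imp fun _ h => h.2) hμU
  by_cases hνS : ν S = 0
  · have hνSc : ν Sᶜ ≠ 0 := by rw [prob_compl_eq_one_sub hS, hνS]; simp
    have h0 := eq_zero_of_null (Kernel.Invariant.sub hstat hinf inf_le_right) hS.compl hνSc
      hsing.measure_compl_nullSet
    rw [inf_comm] at h0
    exact (Measure.eq_of_le_of_isProbabilityMeasure (Measure.le_of_sub_inf_eq_zero h0)).symm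
  · have h0 := eq_zero_of_null (Kernel.Invariant.sub hstat' hinf inf_le_left) hS hνS
      hsing.measure_nullSet
    exact Measure.eq_of_le_of_isProbabilityMeasure (Measure.le_of_sub_inf_eq_zero h0)

/-- Uniqueness assertion of Theorem 5.2 of the paper (Metropolis–Hastings–Green): on a
standard Borel space, a stationary probability measure `ν` of a Markov kernel `κ` that is
irreducible with respect to `ν` is the unique stationary probability measure of `κ`. -/
theorem stationary_unique_of_irreducible
    {Ω : Type*} [MeasurableSpace Ω] [StandardBorelSpace Ω]
    (κ : Kernel Ω Ω) [IsMarkovKernel κ]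
    (ν : Measure Ω) [IsProbabilityMeasure ν]
    (hstat : ν.bind (fun ω => κ ω) = ν)
    (hirr : ∀ ω : Ω, ∀ U : Set Ω, MeasurableSet U → ν U > 0 →
      ∃ n ≥ 1, ((fun m : Measure Ω => m.bind (fun ω' => κ ω'))^[n] (Measure.dirac ω)) U > 0)
    (ν' : Measure Ω) [IsProbabilityMeasure ν']
    (hstat' : ν'.bind (fun ω => κ ω) = ν') :
    ν' = ν :=
  stationary_unique_of_irreducible_general κ ν hstat hirr ν' hstat'
end

section
/- Let Ω be a measurable space, μ a probability measure on Ω, and ℓ : Ω → ℝ≥0∞ measurable with ℓ ω ≠ 0 and ℓ ω ≠ ∞ for every ω. Consider the independence proposal kernel k ω = μ for all ω (this is the kernel mutateTree with p = 1, which resamples the entire state) with Green ratio r (ω, ω') = ℓ ω' / ℓ ω, and its Metropolis–Hastings–Green kernel κMHG ω = μ.withDensity (fun ω' => min 1 (ℓ ω' / ℓ ω)) + (1 - ∫⁻ ω', min 1 (ℓ ω' / ℓ ω) ∂μ) • Measure.dirac ω. Then κMHG is irreducible in one step with respect to the unnormalized posterior: for every ω ∈ Ω and every measurable set U with (μ.withDensity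 ℓ) U > 0, one has (κMHG ω) U > 0. -/
open MeasureTheory ENNReal

/-! A set charged by the posterior `μ.withDensity ℓ` is charged by `μ`. The accepted part of the
MHG kernel is `μ` reweighted by the acceptance probability `min 1 (ℓ ω' / ℓ ω)`, which never
vanishes because `ℓ` is positive and finite; so `μ` is absolutely continuous with respect to
every `κMHG ω`. -/

theorem ENNReal.min_one_div_pos {a b : ℝ≥0∞} (ha : a ≠ 0) (hb : b ≠ ∞) : 0 < min 1 (a / b) :=
  lt_min one_pos (ENNReal.div_pos ha hb)

theorem MeasureTheory.Measure.absolutelyContinuous_withDensity_add_smul_dirac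
    {Ω : Type*} [MeasurableSpace Ω] {μ : Measure Ω} {f : Ω → ℝ≥0∞}
    (hf : AEMeasurable f μ) (hf0 : ∀ᵐ x ∂μ, f x ≠ 0) (c : ℝ≥0∞) (ω : Ω) :
    μ ≪ μ.withDensity f + c • Measure.dirac ω :=
  (withDensity_absolutelyContinuous' hf hf0).add_right _

theorem mhg_independence_kernel_irreducible_general
    {Ω : Type*} [MeasurableSpace Ω]
    (μ : Measure Ω)
    (ℓ : Ω → ℝ≥0∞) (hℓ : Measurable ℓ)
    (hℓ0 : ∀ ω, ℓ ω ≠ 0) (hℓtop : ∀ ω, ℓ ω ≠ ∞)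
    (κMHG : Ω → Measure Ω)
    (hκ : κMHG = fun ω =>
      μ.withDensity (fun ω' => min 1 (ℓ ω' / ℓ ω))
        + (1 - ∫⁻ ω', min 1 (ℓ ω' / ℓ ω) ∂μ) • Measure.dirac ω) :
    ∀ ω : Ω, ∀ U : Set Ω, MeasurableSet U → (μ.withDensity ℓ) U > 0 →
      (κMHG ω) U > 0 := by
  intro ω U _ hpos
  have hacc : Measurable fun ω' => min 1 (ℓ ω' / ℓ ω) :=
    measurable_const.min (hℓ.div_const _)
  have hμκ : μ ≪ κMHG ω := hκ ▸
    Measure.absolutelyContinuous_withDensity_add_smul_dirac hacc.aemeasurable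
      (ae_of_all _ fun ω' => (ENNReal.min_one_div_pos (hℓ0 ω') (hℓtop ω)).ne') _ ω
  have hpost : μ.withDensity ℓ ≪ κMHG ω := (withDensity_absolutelyContinuous μ ℓ).trans hμκ
  exact pos_iff_ne_zero.2 fun hU => hpos.ne' (hpost hU)

/-- Proposition 5.3 of the paper: for the independence proposal kernel `k ω = μ`
(the kernel `mutateTree` with `p = 1`, resampling the entire state) with Green ratio
`r (ω, ω') = ℓ ω' / ℓ ω`, the induced Metropolis–Hastings–Green kernel is irreducible in
one step with respect to the unnormalized posterior `μ.withDensity ℓ`. -/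
theorem mhg_independence_kernel_irreducible
    {Ω : Type*} [MeasurableSpace Ω]
    (μ : Measure Ω) [IsProbabilityMeasure μ]
    (ℓ : Ω → ℝ≥0∞) (hℓ : Measurable ℓ)
    (hℓ0 : ∀ ω, ℓ ω ≠ 0) (hℓtop : ∀ ω, ℓ ω ≠ ∞)
    (κMHG : Ω → Measure Ω)
    (hκ : κMHG = fun ω =>
      μ.withDensity (fun ω' => min 1 (ℓ ω' / ℓ ω))
        + (1 - ∫⁻ ω', min 1 (ℓ ω' / ℓ ω) ∂μ) • Measure.dirac ω) :
    ∀ ω : Ω, ∀ U : Set Ω, MeasurableSet U → (μ.withDensity ℓ) U > 0 →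
      (κMHG ω) U > 0 :=
  mhg_independence_kernel_irreducible_general μ ℓ hℓ hℓ0 hℓtop κMHG hκ
end

section
/- Let Ω be a measurable space, let κ and κ' be Markov kernels on Ω, let ν be a probability measure on Ω, and let r : ℝ≥0∞ with 0 < r and r < 1. Define the mixture kernel κmix ω = r • κ ω + (1 - r) • κ' ω. If κ is irreducible with respect to ν, then κmix is irreducible with respect to ν. -/
/-!
If `c • κ ω ≤ η ω` for every `ω` with `c ≠ 0`, then by induction the `n`-step law of `η` dominates
`cⁿ` times the `n`-step law of `κ`, so every set that `κ` reaches with positive probability is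
also reached by `η`. The mixture `r • κ + (1 - r) • κ'` dominates `r • κ`.
-/

open MeasureTheory ProbabilityTheory ENNReal

def KernelIrreducible {Ω : Type*} [MeasurableSpace Ω]
    (κ : Ω → Measure Ω) (ν : Measure Ω) : Prop :=
  ∀ ω : Ω, ∀ U : Set Ω, MeasurableSet U → ν U > 0 →
    ∃ n ≥ 1, ((fun m : Measure Ω => m.bind κ)^[n] (Measure.dirac ω)) U > 0

namespace MeasureTheory.Measure

variable {α β : Type*} [MeasurableSpace α] [MeasurableSpace β]

lemma measurable_const_smul (c : ℝ≥0∞) : Measurable fun μ : Measure α => c • μ :=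
  measurable_of_measurable_coe _ fun _ hs => (measurable_coe hs).const_mul c

lemma bind_mono_left_s12 {m m' : Measure α} (h : m ≤ m') {f : α → Measure β} (hf : Measurable f) :
    m.bind f ≤ m'.bind f := by
  refine le_iff.2 fun s hs => ?_
  rw [bind_apply hs hf.aemeasurable, bind_apply hs hf.aemeasurable]
  exact lintegral_mono' h le_rfl

lemma smul_bind_le_bind (m : Measure α) {c : ℝ≥0∞} {κ η : α → Measure β} (hη : Measurable η)
    (h : ∀ a, c • κ a ≤ η a) : c • m.bind κ ≤ m.bind η := by
  refine le_iff.2 fun s hs => ?_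
  calc (c • m.bind κ) s = c * m.bind κ s := smul_apply c _ s
    _ ≤ c * ∫⁻ a, κ a s ∂m := by gcongr; exact bind_apply_le κ hs
    _ ≤ ∫⁻ a, c * κ a s ∂m := lintegral_const_mul_le c _
    _ ≤ ∫⁻ a, η a s ∂m := lintegral_mono fun a => le_iff'.1 (h a) s
    _ = m.bind η s := (bind_apply hs hη.aemeasurable).symm

lemma smul_pow_iterate_bind_le {c : ℝ≥0∞} {κ η : α → Measure α} (hη : Measurable η)
    (h : ∀ a, c • κ a ≤ η a) (μ : Measure α) (n : ℕ) :
    c ^ n • (fun m : Measure α => m.bind κ)^[n] μ ≤ (fun m : Measure α => m.bind η)^[n] μ := by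
  induction n with
  | zero => simp
  | succ n ih =>
    rw [Function.iterate_succ_apply', Function.iterate_succ_apply', pow_succ', mul_smul,
      ← bind_smul]
    exact (smul_bind_le_bind _ hη h).trans (bind_mono_left_s12 ih hη)

end MeasureTheory.Measure

lemma KernelIrreducible.of_smul_le {Ω : Type*} [MeasurableSpace Ω] {κ η : Ω → Measure Ω}
    {ν : Measure Ω} (hκ : KernelIrreducible κ ν) {c : ℝ≥0∞} (hc : c ≠ 0) (hη : Measurable η)
    (h : ∀ ω, c • κ ω ≤ η ω) : KernelIrreducible η ν := by
  intro ω U hU hνU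
  obtain ⟨n, hn, hκU⟩ := hκ ω U hU hνU
  refine ⟨n, hn, lt_of_lt_of_le ?_ (Measure.le_iff'.1
    (Measure.smul_pow_iterate_bind_le hη h (Measure.dirac ω) n) U)⟩
  exact ENNReal.mul_pos (pow_ne_zero n hc) hκU.ne'

theorem mixture_irreducible_general
    {Ω : Type*} [MeasurableSpace Ω]
    (κ κ' : Kernel Ω Ω)
    (ν : Measure Ω)
    (r : ℝ≥0∞) (hr0 : 0 < r)
    (κmix : Ω → Measure Ω)
    (hmix : κmix = fun ω => r • κ ω + (1 - r) • κ' ω)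
    (hirr : KernelIrreducible (fun ω => κ ω) ν) :
    KernelIrreducible κmix ν := by
  subst hmix
  have hmeas : Measurable fun ω => r • κ ω + (1 - r) • κ' ω :=
    ((Measure.measurable_const_smul r).comp κ.measurable).add
      ((Measure.measurable_const_smul (1 - r)).comp κ'.measurable)
  exact hirr.of_smul_le hr0.ne' hmeas fun ω => Measure.le_add_right le_rfl

/-- Proposition 6.2 of the paper: mixing an irreducible Markov kernel `κ` with any other
Markov kernel `κ'` with weights `r` and `1 - r`, `0 < r < 1`, again yields an
irreducible kernel. -/
theorem mixture_irreducible
    {Ω : Type*} [MeasurableSpace Ω]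
    (κ κ' : Kernel Ω Ω) [IsMarkovKernel κ] [IsMarkovKernel κ']
    (ν : Measure Ω) [IsProbabilityMeasure ν]
    (r : ℝ≥0∞) (hr0 : 0 < r) (hr1 : r < 1)
    (κmix : Ω → Measure Ω)
    (hmix : κmix = fun ω => r • κ ω + (1 - r) • κ' ω)
    (hirr : KernelIrreducible (fun ω => κ ω) ν) :
    KernelIrreducible κmix ν :=
  mixture_irreducible_general κ κ' ν r hr0 κmix hmix hirr
end

section
/- Let (Ω', 𝒜, P) be a probability space and let X : ℕ → Ω' → ℝ be measurable functions that are independent (iIndepFun with respect to P) and identically distributed (each X k has the same law as X 0), with X k ω ∈ Set.Icc (0:ℝ) 1 for all k and ω, and P {ω | 0 < X 0 ω} > 0. Then for P-almost every ω, the stick-breaking weights v k = X k ω * ∏_{i ∈ Finset.range k} (1 - X i ω) sum to one: HasSum (fun k => X k ω * ∏ i ∈ Finset.range k, (1 - X i ω)) 1. In particular this holds for the stick-breaking construction of the Dirichlet process, where the X k are i.i.d. Beta(1, α) random variables. -/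
open MeasureTheory ProbabilityTheory Filter Finset Topology

/-!
By the strong law of large numbers, `∑_{i<n} X i ω` grows like `n · 𝔼[X 0]`, and `𝔼[X 0] > 0`
because `X 0 ≥ 0` is positive with positive probability; so `∑ X i ω = ∞` almost surely. Since
`1 - x ≤ exp (-x)`, the unbroken remainder `∏_{i<n} (1 - X i ω)`, which is `1` minus the `n`-th
partial sum of the stick lengths, is at most `exp (-∑_{i<n} X i ω) → 0`.
-/

def stickLength {R : Type*} [CommRing R] (r : ℕ → R) (k : ℕ) : R :=
  r k * ∏ i ∈ range k, (1 - r i)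

theorem sum_range_stickLength {R : Type*} [CommRing R] (r : ℕ → R) (n : ℕ) :
    ∑ k ∈ range n, stickLength r k = 1 - ∏ i ∈ range n, (1 - r i) := by
  induction n with
  | zero => simp
  | succ n ih =>
    rw [sum_range_succ, ih, prod_range_succ, stickLength]
    ring

theorem prod_one_sub_le_exp_neg_sum {ι : Type*} (s : Finset ι) {x : ι → ℝ}
    (hx : ∀ i ∈ s, x i ≤ 1) :
    ∏ i ∈ s, (1 - x i) ≤ Real.exp (-∑ i ∈ s, x i) := by
  rw [← sum_neg_distrib, Real.exp_sum]
  exact prod_le_prod (fun i hi => sub_nonneg.2 (hx i hi)) fun i _ => Real.one_sub_le_exp_neg _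

theorem tendsto_prod_one_sub_zero {x : ℕ → ℝ} (hx : ∀ i, x i ≤ 1)
    (hsum : Tendsto (fun n => ∑ i ∈ range n, x i) atTop atTop) :
    Tendsto (fun n => ∏ i ∈ range n, (1 - x i)) atTop (𝓝 0) :=
  squeeze_zero (fun _ => prod_nonneg fun i _ => sub_nonneg.2 (hx i))
    (fun _ => prod_one_sub_le_exp_neg_sum _ fun i _ => hx i)
    (Real.tendsto_exp_neg_atTop_nhds_zero.comp hsum)

theorem hasSum_stickLength_one {r : ℕ → ℝ} (hr : ∀ i, r i ∈ Set.Icc 0 1)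
    (hsum : Tendsto (fun n => ∑ i ∈ range n, r i) atTop atTop) :
    HasSum (stickLength r) 1 := by
  have hnonneg : ∀ k, 0 ≤ stickLength r k := fun k =>
    mul_nonneg (hr k).1 (prod_nonneg fun i _ => sub_nonneg.2 (hr i).2)
  rw [hasSum_iff_tendsto_nat_of_nonneg hnonneg]
  simp_rw [sum_range_stickLength]
  simpa using (tendsto_prod_one_sub_zero (fun i => (hr i).2) hsum).const_sub 1

theorem tendsto_atTop_of_tendsto_inv_mul {S : ℕ → ℝ} {c : ℝ} (hc : 0 < c)
    (h : Tendsto (fun n : ℕ => (n : ℝ)⁻¹ * S n) atTop (𝓝 c)) :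
    Tendsto S atTop atTop := by
  refine (tendsto_natCast_atTop_atTop.atTop_mul_pos hc h).congr' ?_
  filter_upwards [eventually_ne_atTop 0] with n hn
  field_simp

theorem stickBreaking_hasSum_one_general
    {Ω' : Type*} [MeasurableSpace Ω'] (P : Measure Ω') [IsProbabilityMeasure P]
    (X : ℕ → Ω' → ℝ)
    (hindep : iIndepFun X P)
    (hident : ∀ k, IdentDistrib (X k) (X 0) P P)
    (hrange : ∀ k ω, X k ω ∈ Set.Icc (0:ℝ) 1)
    (hpos : P {ω | 0 < X 0 ω} > 0) :
    ∀ᵐ ω ∂P, HasSum (fun k => X k ω * ∏ i ∈ Finset.range k, (1 - X i ω)) 1 := by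
  have hint : Integrable (X 0) P :=
    .of_bound (hident 0).aemeasurable_fst.aestronglyMeasurable 1 <| .of_forall fun ω => by
      rw [Real.norm_of_nonneg (hrange 0 ω).1]
      exact (hrange 0 ω).2
  have hmean : 0 < P[X 0] :=
    (integral_pos_iff_support_of_nonneg (fun ω => (hrange 0 ω).1) hint).2 <|
      hpos.trans_le <| measure_mono fun ω (hω : 0 < X 0 ω) => hω.ne'
  filter_upwards [strong_law_ae X hint (fun _ _ hij => hindep.indepFun hij) hident] with ω hω
  exact hasSum_stickLength_one (fun k => hrange k ω)
    (tendsto_atTop_of_tendsto_inv_mul hmean (by simpa only [smul_eq_mul] using hω))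

/-- Stick-breaking sums to one (Section 3.3.1 of the paper): for i.i.d. proportions
`X k ∈ [0,1]` with `P(X 0 > 0) > 0`, almost surely the stick lengths
`v k = X k * ∏_{i<k} (1 - X i)` have sum `1`. In particular this applies to the
stick-breaking construction of the Dirichlet process with `X k ∼ Beta(1, α)`. -/
theorem stickBreaking_hasSum_one
    {Ω' : Type*} [MeasurableSpace Ω'] (P : Measure Ω') [IsProbabilityMeasure P]
    (X : ℕ → Ω' → ℝ) (hmeas : ∀ k, Measurable (X k))
    (hindep : iIndepFun X P)
    (hident : ∀ k, IdentDistrib (X k) (X 0) P P)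
    (hrange : ∀ k ω, X k ω ∈ Set.Icc (0:ℝ) 1)
    (hpos : P {ω | 0 < X 0 ω} > 0) :
    ∀ᵐ ω ∂P, HasSum (fun k => X k ω * ∏ i ∈ Finset.range k, (1 - X i ω)) 1 :=
  stickBreaking_hasSum_one_general P X hindep hident hrange hpos
end

section
/- Let Ω, X, Y, Z, W be measurable spaces, μ a probability measure on Ω, and γ : Ω → Ω × Ω a measurable map with Measure.map γ μ = μ.prod μ. For measurable f : X × Ω → Y and g : Y × Ω → Z, define their Kleisli composite g ⊚ f : X × Ω → Z by (g ⊚ f) (x, ω) = g (f (x, (γ ω).1), (γ ω).2). Then composition of probability kernels is associative up to distributional equivalence: for all measurable f : X × Ω → Y, g : Y × Ω → Z, h : Z × Ω → W and every x : X, Measure.map (fun ω => (h ⊚ (g ⊚ f)) (x, ω)) μ = Measure.map (fun ω => ((h ⊚ g) ⊚ f) (x, ω)) μ. -/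
/-!
Both composites feed `f`, `g`, `h` with three seeds cut out of one seed by two uses of `γ`:
`h ⊚ (g ⊚ f)` splits the first half of `γ ω` again, `(h ⊚ g) ⊚ f` the second half. Since `γ`
sends `μ` to `μ ⊗ μ`, either way of cutting sends `μ` to `μ ⊗ μ ⊗ μ`, so the two composites are
one and the same function of three independent `μ`-distributed seeds.
-/

open MeasureTheory

/-- The Kleisli composite of two probability kernels `f : X × Ω → Y` and `g : Y × Ω → Z`
with respect to a seed-splitting map `γ : Ω → Ω × Ω`: run `f` on the first half of the
split seed and `g` on the second half. -/
def kleisliComp {Ω X Y Z : Type*} (γ : Ω → Ω × Ω)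
    (g : Y × Ω → Z) (f : X × Ω → Y) : X × Ω → Z :=
  fun q => g (f (q.1, (γ q.2).1), (γ q.2).2)

section SeedSplitting

variable {Ω : Type*}

def splitThreeLeft (γ : Ω → Ω × Ω) : Ω → Ω × Ω × Ω :=
  Equiv.prodAssoc Ω Ω Ω ∘ Prod.map γ id ∘ γ

def splitThreeRight (γ : Ω → Ω × Ω) : Ω → Ω × Ω × Ω :=
  Prod.map id γ ∘ γ

variable [MeasurableSpace Ω] {μ : Measure Ω} [SFinite μ] {γ : Ω → Ω × Ω}

theorem MeasureTheory.MeasurePreserving.splitThreeLeft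
    (hγ : MeasurePreserving γ μ (μ.prod μ)) :
    MeasurePreserving (splitThreeLeft γ) μ (μ.prod (μ.prod μ)) :=
  (measurePreserving_prodAssoc μ μ μ).comp ((hγ.prod (MeasurePreserving.id μ)).comp hγ)

theorem MeasureTheory.MeasurePreserving.splitThreeRight
    (hγ : MeasurePreserving γ μ (μ.prod μ)) :
    MeasurePreserving (splitThreeRight γ) μ (μ.prod (μ.prod μ)) :=
  ((MeasurePreserving.id μ).prod hγ).comp hγ

end SeedSplitting

section ThreeSeeds

variable {Ω X Y Z W : Type*} (γ : Ω → Ω × Ω) (f : X × Ω → Y) (g : Y × Ω → Z) (h : Z × Ω → W)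
  (x : X)

theorem kleisliComp_kleisliComp_right_eq_comp_splitThreeLeft :
    (fun ω => kleisliComp γ h (kleisliComp γ g f) (x, ω))
      = (fun s : Ω × Ω × Ω => h (g (f (x, s.1), s.2.1), s.2.2)) ∘ splitThreeLeft γ :=
  rfl

theorem kleisliComp_kleisliComp_left_eq_comp_splitThreeRight :
    (fun ω => kleisliComp γ (kleisliComp γ h g) f (x, ω))
      = (fun s : Ω × Ω × Ω => h (g (f (x, s.1), s.2.1), s.2.2)) ∘ splitThreeRight γ :=
  rfl

end ThreeSeeds

/-- Associativity up to distributional equivalence of the composition of probability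
kernels (the core of Proposition 5.5 of the paper), in the measurable-space fragment:
if `γ` is measure-preserving from `(Ω, μ)` to `(Ω × Ω, μ ⊗ μ)`, then for measurable
kernels `f, g, h` and every input `x`, the two ways of associating their Kleisli
composite have the same law. -/
theorem kleisliComp_assoc_law
    {Ω X Y Z W : Type*} [MeasurableSpace Ω] [MeasurableSpace X] [MeasurableSpace Y]
    [MeasurableSpace Z] [MeasurableSpace W]
    (μ : Measure Ω) [IsProbabilityMeasure μ]
    (γ : Ω → Ω × Ω) (hγ : Measurable γ) (hγμ : Measure.map γ μ = μ.prod μ)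
    (f : X × Ω → Y) (hf : Measurable f)
    (g : Y × Ω → Z) (hg : Measurable g)
    (h : Z × Ω → W) (hh : Measurable h)
    (x : X) :
    Measure.map (fun ω => kleisliComp γ h (kleisliComp γ g f) (x, ω)) μ
      = Measure.map (fun ω => kleisliComp γ (kleisliComp γ h g) f (x, ω)) μ := by
  have hγ' : MeasurePreserving γ μ (μ.prod μ) := ⟨hγ, hγμ⟩
  have hK : Measurable fun s : Ω × Ω × Ω => h (g (f (x, s.1), s.2.1), s.2.2) := by fun_prop
  rw [kleisliComp_kleisliComp_right_eq_comp_splitThreeLeft,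
    kleisliComp_kleisliComp_left_eq_comp_splitThreeRight,
    ← Measure.map_map hK hγ'.splitThreeLeft.measurable, hγ'.splitThreeLeft.map_eq,
    ← Measure.map_map hK hγ'.splitThreeRight.measurable, hγ'.splitThreeRight.map_eq]
end
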